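/- arXiv:1312.7215 — 2 statements merged into one kernel-verified Lean document; each statement's English description precedes it below -/
import Mathlib

section
/- Let 𝒜 be an abelian ℚ-linear symmetric monoidal category whose tensor product is exact in each variable, and let 0 → F →f G → H → 0 be a short exact sequence in 𝒜. Then for all integers n ≥ 1 and i ≥ 0, the subobject ℱ^{i+1}_F(G^{⊗n}) ⊗ F of ℱ^i_F(G^{⊗n}) ⊗ G is the kernel of the morphism (ℱ^i_F(G^{⊗n}) ⊗ F) ⊕ (ℱ^{i+1}_F(G^{⊗n}) ⊗ G) → ℱ^i_F(G^{⊗n}) ⊗ G whose component on the first summand is id ⊗ f and whose component on the second summand is the negative of (inclusion) ⊗ id_G; equivalently, the commutative square with vertices ℱ^{i+1}_F(G^{⊗n}) ⊗ F, ℱ^i_F(G^{⊗n}) ⊗ F, ℱ^{i+1}_F(G^{⊗n}) ⊗ G and ℱ^i_F(G^{⊗n}) ⊗ G, formed by tensoring the inclusion ℱ^{i+1}_F(G^{⊗n}) ⊆ ℱ^i_F(G^{⊗n}) with f : F → G, is a pullback square. -/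
/-!
Only the fact that `ℱ^{i+1}_F(G^{⊗n}) ⟶ ℱ^i_F(G^{⊗n})` is a monomorphism matters: for any mono
`a : A ⟶ B`, exactness of `⊗` makes `A ⊗ F` the kernel of `A ⊗ G ⟶ A ⊗ H`, and `a ⊗ H` is mono,
so a morphism to `A ⊗ G` whose image in `B ⊗ G` comes from `B ⊗ F` dies in `B ⊗ H`, hence in
`A ⊗ H`, hence factors through `A ⊗ F`.
-/

set_option linter.unusedSectionVars false

open CategoryTheory CategoryTheory.Limits CategoryTheory.MonoidalCategory

noncomputable section

universe v u

variable {C : Type u} [Category.{v} C] [Abelian C] [CategoryTheory.Linear ℚ C]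
  [MonoidalCategory C] [SymmetricCategory C] [MonoidalPreadditive C]
  [MonoidalLinear ℚ C]
  [∀ X : C, PreservesFiniteLimits (tensorLeft X)]
  [∀ X : C, PreservesFiniteColimits (tensorLeft X)]
  [∀ X : C, PreservesFiniteLimits (tensorRight X)]
  [∀ X : C, PreservesFiniteColimits (tensorRight X)]

attribute [local instance] Abelian.hasFiniteBiproducts

/-- The `n`-fold (left-associated) tensor power `M^{⊗n}`. -/
def tPow (M : C) : ℕ → C
  | 0 => 𝟙_ C
  | n + 1 => tPow M n ⊗ M

/-- The morphism `M^{⊗n} ⟶ M^{⊗n}` exchanging the tensor factors in positions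
`i` and `i+1`, built from the braiding (symmetry) and the associators. -/
def adjSwap (M : C) : (n : ℕ) → ℕ → (tPow M n ⟶ tPow M n)
  | 0, _ => 𝟙 _
  | 1, _ => 𝟙 _
  | n + 2, i =>
    if i = n then
      (α_ (tPow M n) M M).hom ≫ (tPow M n ◁ (β_ M M).hom) ≫ (α_ (tPow M n) M M).inv
    else
      adjSwap M (n + 1) i ⊗ₘ 𝟙 M

/-- Composite of a list of adjacent swaps. -/
def chainMor (M : C) (n : ℕ) (l : List ℕ) : tPow M n ⟶ tPow M n :=
  l.foldr (fun j g => adjSwap M n j ≫ g) (𝟙 _)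

/-- `σ_M : M^{⊗n} ⟶ M^{⊗n}`, the canonical morphism permuting the `n` tensor
factors of `M^{⊗n}` (indexed bijectively by `σ ∈ Σ_n`). -/
def permMor (M : C) : (n : ℕ) → Equiv.Perm (Fin n) → (tPow M n ⟶ tPow M n)
  | 0, _ => 𝟙 _
  | n + 1, σ =>
    ((permMor M n (Equiv.Perm.decomposeFin σ).2) ⊗ₘ 𝟙 M) ≫
      chainMor M (n + 1)
        (List.range' ((Equiv.Perm.decomposeFin σ).1 : ℕ)
          (n - ((Equiv.Perm.decomposeFin σ).1 : ℕ))).reverse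

/-- The symmetrizer `s^n_M := (1/n!) ∑_{σ ∈ Σ_n} σ_M : M^{⊗n} ⟶ M^{⊗n}`. -/
def symmetrizer (M : C) (n : ℕ) : tPow M n ⟶ tPow M n :=
  (n.factorial : ℚ)⁻¹ • ∑ σ : Equiv.Perm (Fin n), permMor M n σ

/-- The `n`-th symmetric power `Sym^n(M)`, the image of the symmetrizer. -/
def symObj (M : C) (n : ℕ) : C := image (symmetrizer M n)

/-- `f^{⊗n} : X^{⊗n} ⟶ Y^{⊗n}`. -/
def morPow {X Y : C} (f : X ⟶ Y) : (n : ℕ) → (tPow X n ⟶ tPow Y n)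
  | 0 => 𝟙 _
  | n + 1 => morPow f n ⊗ₘ f

/-- The canonical isomorphism `M^{⊗a} ⊗ M^{⊗b} ≅ M^{⊗(a+b)}`. -/
def tPowMulIso (M : C) : (a b : ℕ) → ((tPow M a ⊗ tPow M b) ≅ tPow M (a + b))
  | _, 0 => ρ_ _
  | a, b + 1 => (α_ _ _ _).symm ≪≫ whiskerRightIso (tPowMulIso M a b) M

/-- The morphism `f^{⊗i} ⊗ id_G^{⊗(n-i)} : F^{⊗i} ⊗ G^{⊗(n-i)} ⟶ G^{⊗n}`. -/
def symIncMor {F G : C} (f : F ⟶ G) (n i : ℕ) (h : i ≤ n) :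
    (tPow F i ⊗ tPow G (n - i)) ⟶ tPow G n :=
  (morPow f i ⊗ₘ 𝟙 (tPow G (n - i))) ≫ (tPowMulIso G i (n - i)).hom ≫
    eqToHom (by rw [Nat.add_sub_cancel' h])

/-- `Sym^n_i(G)`: the image of `s^n_G ∘ (f^{⊗i} ⊗ id_G^{⊗(n-i)})` as a subobject
of `G^{⊗n}` (and `0` for `i > n`). -/
def SymFilt {F G : C} (f : F ⟶ G) (n i : ℕ) : Subobject (tPow G n) :=
  if h : i ≤ n then imageSubobject (symIncMor f n i h ≫ symmetrizer G n) else ⊥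

/-- Mixed tensor products: `C_{j_1} ⊗ ⋯ ⊗ C_{j_n}` where `C_true = A`,
`C_false = B`. -/
def mixPow (A B : C) : (n : ℕ) → (Fin n → Bool) → C
  | 0, _ => 𝟙_ C
  | n + 1, j => mixPow A B n (fun k => j k.castSucc) ⊗ (bif j (Fin.last n) then A else B)

/-- The component morphism: `f : F ⟶ G` in the `F`-slots, identity in the
`G`-slots. -/
def boolMor {F G : C} (f : F ⟶ G) : (b : Bool) → ((bif b then F else G) ⟶ G)
  | true => f
  | false => 𝟙 G

/-- The canonical map `C_{j_1} ⊗ ⋯ ⊗ C_{j_n} ⟶ G^{⊗n}` (with `C_true = F`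
mapping by `f` and `C_false = G` mapping by the identity). -/
def mixMor {F G : C} (f : F ⟶ G) : (n : ℕ) → (j : Fin n → Bool) → (mixPow F G n j ⟶ tPow G n)
  | 0, _ => 𝟙 _
  | n + 1, j => mixMor f n (fun k => j k.castSucc) ⊗ₘ boolMor f (j (Fin.last n))

/-- The weight of a tuple `j ∈ {0,1}^n`: the number of `F`-slots. -/
def wt {n : ℕ} (j : Fin n → Bool) : ℕ := (Finset.univ.filter fun k => j k = true).card

/-- The filtration `ℱ^i_F(G^{⊗n})`: the subobject of `G^{⊗n}` generated by the
images of all the mixed tensor products of weight (at least) `i`. -/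
def FFilt {F G : C} (f : F ⟶ G) (n i : ℕ) : Subobject (tPow G n) :=
  (Finset.univ.filter fun j : Fin n → Bool => i ≤ wt j).sup
    fun j => imageSubobject (mixMor f n j)

lemma FFilt_antitone {F G : C} (f : F ⟶ G) (n i : ℕ) :
    FFilt f n (i + 1) ≤ FFilt f n i := by
  unfold FFilt
  refine Finset.sup_le fun j hj => ?_
  have hj' : j ∈ Finset.filter (fun j : Fin n → Bool => i ≤ wt j) Finset.univ := by
    simp only [Finset.mem_filter, Finset.mem_univ, true_and] at hj ⊢
    omega
  exact Finset.le_sup (f := fun j : Fin n → Bool => imageSubobject (mixMor f n j)) hj'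

/-- The component inclusion `C_true = F ⟶ F ⊞ H`, `C_false = H ⟶ F ⊞ H`. -/
def boolIncl (F H : C) : (b : Bool) → ((bif b then F else H) ⟶ F ⊞ H)
  | true => biprod.inl
  | false => biprod.inr

/-- The canonical inclusion `C_{j_1} ⊗ ⋯ ⊗ C_{j_n} ⟶ (F ⊞ H)^{⊗n}`
(with `C_true = F`, `C_false = H`, each factor included canonically). -/
def mixIncl (F H : C) : (n : ℕ) → (j : Fin n → Bool) → (mixPow F H n j ⟶ tPow (F ⊞ H) n)
  | 0, _ => 𝟙 _
  | n + 1, j => mixIncl F H n (fun k => j k.castSucc) ⊗ₘ boolIncl F H (j (Fin.last n))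

section

variable {𝒞 : Type*} [Category 𝒞] [HasZeroMorphisms 𝒞]

lemma CategoryTheory.IsPullback.of_isLimit_kernelFork_of_mono {P X Y Z Y' Z' : 𝒞}
    {fst : P ⟶ X} {snd : P ⟶ Y} {f : X ⟶ Z} {g : Y ⟶ Z} (comm : fst ≫ f = snd ≫ g)
    {p : Y ⟶ Y'} {q : Z ⟶ Z'} {m : Y' ⟶ Z'} (hsnd : snd ≫ p = 0)
    (hker : IsLimit (KernelFork.ofι snd hsnd)) (hfq : f ≫ q = 0) (hpq : p ≫ m = g ≫ q)
    [Mono f] [Mono m] : IsPullback fst snd f g := by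
  have hp : ∀ s : PullbackCone f g, s.snd ≫ p = 0 := fun s => by
    rw [← cancel_mono m, Category.assoc, hpq, ← Category.assoc, ← s.condition,
      Category.assoc, hfq, comp_zero, zero_comp]
  have : Mono snd := mono_of_isLimit_fork hker
  let lift (s : PullbackCone f g) := KernelFork.IsLimit.lift' hker s.snd (hp s)
  have lift_snd (s : PullbackCone f g) : (lift s).1 ≫ snd = s.snd := (lift s).2
  refine .of_isLimit' ⟨comm⟩ (PullbackCone.IsLimit.mk _ (fun s => (lift s).1) (fun s => ?_)
    lift_snd (fun s l _ hl => ?_))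
  · rw [← cancel_mono f, Category.assoc, comm, reassoc_of% lift_snd s, s.condition]
  · rw [← cancel_mono snd, hl, lift_snd s]

end

section

variable {𝒜 : Type*} [Category 𝒜] [Abelian 𝒜] [MonoidalCategory 𝒜] [MonoidalPreadditive 𝒜]
  [∀ X : 𝒜, PreservesFiniteLimits (tensorLeft X)]
  [∀ X : 𝒜, PreservesFiniteLimits (tensorRight X)]

lemma CategoryTheory.ShortComplex.ShortExact.isPullback_whiskerRight_whiskerLeft
    {S : ShortComplex 𝒜} (hS : S.ShortExact) {A B : 𝒜} (a : A ⟶ B) [Mono a] :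
    IsPullback (a ▷ S.X₁) (A ◁ S.f) (B ◁ S.f) (a ▷ S.X₂) := by
  have := hS.mono_f
  have : Mono (B ◁ S.f) := (tensorLeft B).map_mono S.f
  have : Mono (a ▷ S.X₃) := (tensorRight S.X₃).map_mono a
  have zero (X : 𝒜) : X ◁ S.f ≫ X ◁ S.g = 0 := by
    rw [← whiskerLeft_comp, S.zero, MonoidalPreadditive.whiskerLeft_zero]
  exact .of_isLimit_kernelFork_of_mono (whisker_exchange a S.f).symm (zero A)
    (isLimitForkMapOfIsLimit' (tensorLeft A) S.zero hS.exact.fIsKernel) (zero B)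
    (whisker_exchange a S.g)

end

theorem FFilt_tensor_isPullback_general (F G H : C) (f : F ⟶ G) (g : G ⟶ H)
    (w : f ≫ g = 0) (hses : (ShortComplex.mk f g w).ShortExact)
    (n i : ℕ) :
    IsPullback
      (Subobject.ofLE (FFilt f n (i + 1)) (FFilt f n i) (FFilt_antitone f n i) ⊗ₘ 𝟙 F)
      (𝟙 ((FFilt f n (i + 1) : C)) ⊗ₘ f)
      (𝟙 ((FFilt f n i : C)) ⊗ₘ f)
      (Subobject.ofLE (FFilt f n (i + 1)) (FFilt f n i) (FFilt_antitone f n i) ⊗ₘ 𝟙 G) := by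
  simpa only [tensorHom_id, id_tensorHom] using
    hses.isPullback_whiskerRight_whiskerLeft (Subobject.ofLE _ _ (FFilt_antitone f n i))

/-- for a short exact sequence `0 → F → G → H → 0`, `n ≥ 1`,
`i ≥ 0`, the square obtained by tensoring the inclusion
`ℱ^{i+1}_F(G^{⊗n}) ⊆ ℱ^i_F(G^{⊗n})` with `f : F ⟶ G` is a pullback square;
equivalently, `ℱ^{i+1}_F(G^{⊗n}) ⊗ F` is the kernel of the map
`(ℱ^i_F(G^{⊗n}) ⊗ F) ⊕ (ℱ^{i+1}_F(G^{⊗n}) ⊗ G) ⟶ ℱ^i_F(G^{⊗n}) ⊗ G`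
with components `id ⊗ f` and `-(inclusion ⊗ id_G)`. -/
theorem FFilt_tensor_isPullback (F G H : C) (f : F ⟶ G) (g : G ⟶ H)
    (w : f ≫ g = 0) (hses : (ShortComplex.mk f g w).ShortExact)
    (n i : ℕ) (hn : 1 ≤ n) :
    IsPullback
      (Subobject.ofLE (FFilt f n (i + 1)) (FFilt f n i) (FFilt_antitone f n i) ⊗ₘ 𝟙 F)
      (𝟙 ((FFilt f n (i + 1) : C)) ⊗ₘ f)
      (𝟙 ((FFilt f n i : C)) ⊗ₘ f)
      (Subobject.ofLE (FFilt f n (i + 1)) (FFilt f n i) (FFilt_antitone f n i) ⊗ₘ 𝟙 G) :=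
  FFilt_tensor_isPullback_general F G H f g w hses n i

end
end

section
/- Let 𝒜 be an abelian ℚ-linear symmetric monoidal category whose tensor product is exact in each variable, and let 0 → F →f G → H → 0 be a short exact sequence in 𝒜. Then for all integers n ≥ 1 and i ≥ 1 there is a short exact sequence 0 → ℱ^{i+1}_F(G^{⊗n}) ⊗ F → (ℱ^i_F(G^{⊗n}) ⊗ F) ⊕ (ℱ^{i+1}_F(G^{⊗n}) ⊗ G) → ℱ^{i+1}_F(G^{⊗(n+1)}) → 0, where the first map has components (inclusion) ⊗ id_F and −(id ⊗ f), and the second map is induced, under the identification G^{⊗n} ⊗ G = G^{⊗(n+1)}, by id ⊗ f on the first summand and by (inclusion) ⊗ id_G on the second summand. -/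
set_option linter.unusedSectionVars false

open CategoryTheory CategoryTheory.Limits CategoryTheory.MonoidalCategory

noncomputable section

universe v u

variable {C : Type u} [Category.{v} C] [Abelian C] [CategoryTheory.Linear ℚ C]
  [MonoidalCategory C] [SymmetricCategory C] [MonoidalPreadditive C]
  [MonoidalLinear ℚ C]
  [∀ X : C, PreservesFiniteLimits (tensorLeft X)]
  [∀ X : C, PreservesFiniteColimits (tensorLeft X)]
  [∀ X : C, PreservesFiniteLimits (tensorRight X)]
  [∀ X : C, PreservesFiniteColimits (tensorRight X)]

attribute [local instance] Abelian.hasFiniteBiproducts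

/-! Tensoring with a fixed object is exact, so `- ⊗ q` carries images to images and finite joins
of subobjects to joins. Splitting each `j ∈ {0,1}^{n+1}` by its last entry therefore gives
`ℱ^{i+1}(G^{⊗(n+1)}) = im(ℱ^i(G^{⊗n}) ⊗ f) ⊔ im(ℱ^{i+1}(G^{⊗n}) ⊗ G)`, which is why the second
map is epi. The first map is mono because its second component `1 ⊗ f` is. For exactness in the
middle, if `(x, y)` is killed by the second map then `y ⊗ g` vanishes after the mono
`ℱ^{i+1}(G^{⊗n}) ⊗ H → G^{⊗n} ⊗ H`, so `y` comes from `ℱ^{i+1}(G^{⊗n}) ⊗ F` by exactness of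
`ℱ^{i+1}(G^{⊗n}) ⊗ -`; its preimage, negated, also accounts for `x` because
`ℱ^i(G^{⊗n}) ⊗ F → G^{⊗n} ⊗ G` is mono.
-/

lemma mono_whiskerRight {X Y : C} (f : X ⟶ Y) [Mono f] (Q : C) : Mono (f ▷ Q) :=
  (tensorRight Q).map_mono f

lemma mono_whiskerLeft {X Y : C} (f : X ⟶ Y) [Mono f] (Q : C) : Mono (Q ◁ f) :=
  (tensorLeft Q).map_mono f

lemma epi_whiskerRight {X Y : C} (f : X ⟶ Y) [Epi f] (Q : C) : Epi (f ▷ Q) :=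
  (tensorRight Q).map_epi f

lemma mono_tensorHom {X Y X' Y' : C} (f : X ⟶ Y) (g : X' ⟶ Y') [Mono f] [Mono g] :
    Mono (f ⊗ₘ g) := by
  have := mono_whiskerRight f X'
  have := mono_whiskerLeft g Y
  rw [MonoidalCategory.tensorHom_def]
  exact mono_comp _ _

lemma imageSubobject_epi_comp {P X Y : C} (e : P ⟶ X) [Epi e] (h : X ⟶ Y) :
    imageSubobject (e ≫ h) = imageSubobject h := by
  refine le_antisymm (imageSubobject_comp_le e h) ?_
  have : StrongEpi e := strongEpi_of_epi e
  have sq : CommSq (factorThruImageSubobject (e ≫ h)) e (imageSubobject (e ≫ h)).arrow h :=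
    ⟨by simp⟩
  exact imageSubobject_le h sq.lift (by simp)

lemma imageSubobject_biprod_desc {P R Z : C} (p : P ⟶ Z) (r : R ⟶ Z) :
    imageSubobject (biprod.desc p r) = imageSubobject p ⊔ imageSubobject r := by
  refine le_antisymm ?_ (sup_le ?_ ?_)
  · refine imageSubobject_le _ (biprod.desc
      (factorThruImageSubobject p ≫ Subobject.ofLE _ _ le_sup_left)
      (factorThruImageSubobject r ≫ Subobject.ofLE _ _ le_sup_right)) ?_
    ext <;> simp
  · simpa using imageSubobject_comp_le biprod.inl (biprod.desc p r)
  · simpa using imageSubobject_comp_le biprod.inr (biprod.desc p r)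

lemma imageSubobject_arrow_tensorHom {X Z Q Q' : C} (m : X ⟶ Z) (q : Q ⟶ Q') :
    imageSubobject ((imageSubobject m).arrow ⊗ₘ q) = imageSubobject (m ⊗ₘ q) := by
  have := epi_whiskerRight (factorThruImageSubobject m) Q
  rw [← imageSubobject_epi_comp (factorThruImageSubobject m ▷ Q), MonoidalCategory.tensorHom_def,
    ← comp_whiskerRight_assoc, imageSubobject_arrow_comp, ← MonoidalCategory.tensorHom_def]

lemma imageSubobject_biprod_desc_tensorHom {X Y Z Q Q' : C} (a : X ⟶ Z) (b : Y ⟶ Z)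
    (q : Q ⟶ Q') :
    imageSubobject (biprod.desc a b ⊗ₘ q) = imageSubobject (a ⊗ₘ q) ⊔ imageSubobject (b ⊗ₘ q) := by
  have : IsIso (biprod.desc (biprod.inl (X := X) (Y := Y) ▷ Q) (biprod.inr ▷ Q)) :=
    ⟨biprod.lift (biprod.fst ▷ Q) (biprod.snd ▷ Q),
      by ext <;> simp [← comp_whiskerRight],
      by simp [← comp_whiskerRight, ← MonoidalPreadditive.add_whiskerRight]⟩
  rw [← imageSubobject_biprod_desc,
    ← imageSubobject_epi_comp (biprod.desc (biprod.inl ▷ Q) (biprod.inr ▷ Q))]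
  congr 1
  ext <;> simp [MonoidalCategory.tensorHom_def, ← comp_whiskerRight_assoc]

lemma imageSubobject_sup_arrow_tensorHom {Z Q Q' : C} (S T : Subobject Z) (q : Q ⟶ Q') :
    imageSubobject ((S ⊔ T).arrow ⊗ₘ q) =
      imageSubobject (S.arrow ⊗ₘ q) ⊔ imageSubobject (T.arrow ⊗ₘ q) := by
  have hST : S ⊔ T = imageSubobject (biprod.desc S.arrow T.arrow) := by
    rw [imageSubobject_biprod_desc, imageSubobject_mono, imageSubobject_mono, Subobject.mk_arrow,
      Subobject.mk_arrow]
  rw [hST, imageSubobject_arrow_tensorHom, imageSubobject_biprod_desc_tensorHom]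

lemma imageSubobject_finset_sup_arrow_tensorHom {ι : Type*} (s : Finset ι) {Z Q Q' : C}
    (S : ι → Subobject Z) (q : Q ⟶ Q') :
    imageSubobject ((s.sup S).arrow ⊗ₘ q) =
      s.sup fun j => imageSubobject ((S j).arrow ⊗ₘ q) := by
  induction s using Finset.cons_induction with
  | empty => rw [Finset.sup_empty, Subobject.bot_arrow]; simp
  | cons a s ha ih => rw [Finset.sup_cons, Finset.sup_cons, imageSubobject_sup_arrow_tensorHom, ih]

lemma exists_comp_arrow_eq_of_imageSubobject_le {X Z : C} {m : X ⟶ Z} {T : Subobject Z}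
    (h : imageSubobject m ≤ T) : ∃ u : X ⟶ T, u ≫ T.arrow = m :=
  ⟨factorThruImageSubobject m ≫ Subobject.ofLE _ _ h, by simp⟩

lemma epi_of_imageSubobject_comp_arrow_eq {P Z : C} {T : Subobject Z} (δ : P ⟶ T)
    (h : imageSubobject (δ ≫ T.arrow) = T) : Epi δ := by
  have hδ : factorThruImageSubobject (δ ≫ T.arrow) ≫ Subobject.ofLE _ _ h.le = δ := by
    rw [← cancel_mono T.arrow, Category.assoc, Subobject.ofLE_arrow, imageSubobject_arrow_comp]
  have : IsIso (Subobject.ofLE _ _ h.le) := (Subobject.isoOfEq _ _ h).isIso_hom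
  rw [← hδ]
  exact epi_comp _ _

lemma wt_snoc {n : ℕ} (j : Fin n → Bool) (b : Bool) :
    wt (Fin.snoc j b : Fin (n + 1) → Bool) = wt j + b.toNat := by
  simp only [wt, Finset.card_filter, Fin.sum_univ_castSucc, Fin.snoc_castSucc, Fin.snoc_last]
  cases b <;> rfl

lemma imageSubobject_mixMor_snoc {F G : C} (f : F ⟶ G) {n : ℕ} (j : Fin n → Bool) (b : Bool) :
    imageSubobject (mixMor f (n + 1) (Fin.snoc j b)) =
      imageSubobject (mixMor f n j ⊗ₘ boolMor f b) := by
  -- the source `mixPow F G n j` depends on `j`, so `Fin.init (Fin.snoc j b) = j` cannot be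
  -- rewritten in place
  have hcongr : ∀ (j' : Fin n → Bool) (b' : Bool), j' = j → b' = b →
      imageSubobject (mixMor f n j' ⊗ₘ boolMor f b') =
        imageSubobject (mixMor f n j ⊗ₘ boolMor f b) := by
    rintro _ _ rfl rfl
    rfl
  exact hcongr _ _ (Fin.init_snoc (α := fun _ => Bool) b j)
    (Fin.snoc_last (α := fun _ => Bool) b j)

lemma imageSubobject_mixMor_le_FFilt {F G : C} (f : F ⟶ G) {n i : ℕ} {j : Fin n → Bool}
    (h : i ≤ wt j) : imageSubobject (mixMor f n j) ≤ FFilt f n i :=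
  Finset.le_sup (f := fun j => imageSubobject (mixMor f n j)) (by simpa using h)

lemma imageSubobject_FFilt_arrow_tensorHom {F G Q Q' : C} (f : F ⟶ G) (n i : ℕ) (q : Q ⟶ Q') :
    imageSubobject ((FFilt f n i).arrow ⊗ₘ q) =
      (Finset.univ.filter fun j : Fin n → Bool => i ≤ wt j).sup
        fun j => imageSubobject (mixMor f n j ⊗ₘ q) := by
  simp only [FFilt, imageSubobject_finset_sup_arrow_tensorHom, imageSubobject_arrow_tensorHom]

lemma FFilt_succ_succ {F G : C} (f : F ⟶ G) (n i : ℕ) :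
    FFilt f (n + 1) (i + 1) =
      imageSubobject ((FFilt f n i).arrow ⊗ₘ f) ⊔
        imageSubobject ((FFilt f n (i + 1)).arrow ⊗ₘ 𝟙 G) := by
  rw [imageSubobject_FFilt_arrow_tensorHom, imageSubobject_FFilt_arrow_tensorHom]
  apply le_antisymm
  · refine Finset.sup_le fun k hk => ?_
    obtain ⟨j, b, rfl⟩ : ∃ j b, k = Fin.snoc j b := ⟨_, _, (Fin.snoc_init_self k).symm⟩
    simp only [Finset.mem_filter, Finset.mem_univ, true_and, wt_snoc] at hk
    rw [imageSubobject_mixMor_snoc]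
    cases b
    · exact le_sup_of_le_right
        (Finset.le_sup (f := fun j => imageSubobject (mixMor f n j ⊗ₘ 𝟙 G)) (by simpa using hk))
    · exact le_sup_of_le_left
        (Finset.le_sup (f := fun j => imageSubobject (mixMor f n j ⊗ₘ f)) (by simpa using hk))
  -- `α` must be given: instance search does not unfold `tPow G (n + 1)` to `tPow G n ⊗ G`
  apply sup_le <;> refine Finset.sup_le (α := Subobject (tPow G n ⊗ G)) fun j hj => ?_
  · rw [Finset.mem_filter] at hj
    rw [show mixMor f n j ⊗ₘ f = mixMor f n j ⊗ₘ boolMor f true from rfl,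
      ← imageSubobject_mixMor_snoc]
    exact imageSubobject_mixMor_le_FFilt f (by simp [wt_snoc, hj.2])
  · rw [Finset.mem_filter] at hj
    rw [show mixMor f n j ⊗ₘ 𝟙 G = mixMor f n j ⊗ₘ boolMor f false from rfl,
      ← imageSubobject_mixMor_snoc]
    exact imageSubobject_mixMor_le_FFilt f (by simp [wt_snoc, hj.2])

lemma biprod_lift_comp_biprod_desc_eq_zero {X Y Z F G : C} {ι : Y ⟶ X} {a : X ⟶ Z}
    {b : Y ⟶ Z} (hab : ι ≫ a = b) (f : F ⟶ G) :
    biprod.lift (ι ⊗ₘ 𝟙 F) (-(𝟙 Y ⊗ₘ f)) ≫ biprod.desc (a ⊗ₘ f) (b ⊗ₘ 𝟙 G) = 0 := by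
  subst hab
  simp [MonoidalCategory.tensorHom_def, whisker_exchange_assoc, whisker_exchange]

lemma exists_lift_of_comp_biprod_desc_eq_zero {X Y Z F G H W : C} {ι : Y ⟶ X}
    {a : X ⟶ Z} {b : Y ⟶ Z} [Mono a] [Mono b] (hab : ι ≫ a = b) {f : F ⟶ G} {g : G ⟶ H}
    {w : f ≫ g = 0} (hfg : (ShortComplex.mk f g w).ShortExact) (t : W ⟶ (X ⊗ F) ⊞ (Y ⊗ G))
    (ht : t ≫ biprod.desc (a ⊗ₘ f) (b ⊗ₘ 𝟙 G) = 0) :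
    ∃ l, l ≫ biprod.lift (ι ⊗ₘ 𝟙 F) (-(𝟙 Y ⊗ₘ f)) = t := by
  have := hfg.mono_f
  have := mono_whiskerRight b H
  have := mono_tensorHom a f
  have hsum : (t ≫ biprod.fst) ≫ (a ⊗ₘ f) = -((t ≫ biprod.snd) ≫ (b ⊗ₘ 𝟙 G)) := by
    rw [eq_neg_iff_add_eq_zero, ← ht, biprod.desc_eq]
    simp only [Preadditive.comp_add, Category.assoc]
  have hafg : (a ⊗ₘ f) ≫ Z ◁ g = 0 := by
    rw [MonoidalCategory.tensorHom_def, Category.assoc, ← MonoidalCategory.whiskerLeft_comp, w,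
      MonoidalPreadditive.whiskerLeft_zero, comp_zero]
  have hsnd : (t ≫ biprod.snd) ≫ Y ◁ g = 0 := by
    rw [← cancel_mono (b ▷ H), zero_comp, Category.assoc, whisker_exchange,
      ← MonoidalCategory.tensorHom_id, ← Category.assoc, ← neg_neg (_ ≫ (b ⊗ₘ 𝟙 G)), ← hsum,
      Preadditive.neg_comp, Category.assoc, hafg, comp_zero, neg_zero]
  have : Mono ((ShortComplex.mk f g w).map (tensorLeft Y)).f := mono_whiskerLeft f Y
  obtain ⟨l, hl⟩ : ∃ l : W ⟶ Y ⊗ F, l ≫ Y ◁ f = t ≫ biprod.snd :=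
    ⟨_, (hfg.exact.map (tensorLeft Y)).lift_f _ hsnd⟩
  refine ⟨-l, biprod.hom_ext _ _ ?_ (by simp [hl])⟩
  rw [← cancel_mono (a ⊗ₘ f), hsum, ← hl, ← hab]
  simp [MonoidalCategory.tensorHom_def, whisker_exchange_assoc, whisker_exchange]

lemma shortExact_biprod_lift_biprod_desc {X Y Z F G H : C} {ι : Y ⟶ X} {a : X ⟶ Z}
    {b : Y ⟶ Z} [Mono a] [Mono b] (hab : ι ≫ a = b) {f : F ⟶ G} {g : G ⟶ H} {w : f ≫ g = 0}
    (hfg : (ShortComplex.mk f g w).ShortExact) {T : Subobject (Z ⊗ G)}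
    {u : X ⊗ F ⟶ T} {v : Y ⊗ G ⟶ T} (hu : u ≫ T.arrow = a ⊗ₘ f) (hv : v ≫ T.arrow = b ⊗ₘ 𝟙 G)
    (hT : imageSubobject (a ⊗ₘ f) ⊔ imageSubobject (b ⊗ₘ 𝟙 G) = T) :
    ∃ w' : biprod.lift (ι ⊗ₘ 𝟙 F) (-(𝟙 Y ⊗ₘ f)) ≫ biprod.desc u v = 0,
      (ShortComplex.mk _ _ w').ShortExact := by
  have := hfg.mono_f
  have := mono_tensorHom (𝟙 Y) f
  have : Mono (biprod.lift (ι ⊗ₘ 𝟙 F) (-(𝟙 Y ⊗ₘ f))) := by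
    refine mono_of_mono_fac (f := -biprod.snd) (h := 𝟙 Y ⊗ₘ f) ?_
    simp
  have hδ : biprod.desc u v ≫ T.arrow = biprod.desc (a ⊗ₘ f) (b ⊗ₘ 𝟙 G) := by
    ext <;> simp [hu, hv]
  have w' : biprod.lift (ι ⊗ₘ 𝟙 F) (-(𝟙 Y ⊗ₘ f)) ≫ biprod.desc u v = 0 := by
    rw [← cancel_mono T.arrow, Category.assoc, hδ, zero_comp,
      biprod_lift_comp_biprod_desc_eq_zero hab]
  have hker := KernelFork.IsLimit.ofι' _ w' fun k hk =>
    have hk' : k ≫ biprod.desc (a ⊗ₘ f) (b ⊗ₘ 𝟙 G) = 0 := by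
      rw [← hδ, reassoc_of% hk, zero_comp]
    ⟨_, (exists_lift_of_comp_biprod_desc_eq_zero hab hfg k hk').choose_spec⟩
  exact ⟨w', { exact := ShortComplex.exact_of_f_is_kernel _ hker
               epi_g := epi_of_imageSubobject_comp_arrow_eq _
                 (by rw [hδ, imageSubobject_biprod_desc, hT]) }⟩

theorem FFilt_shortExact_succ_general (F G H : C) (f : F ⟶ G) (g : G ⟶ H)
    (w : f ≫ g = 0) (hses : (ShortComplex.mk f g w).ShortExact)
    (n i : ℕ) :
    ∃ (u : ((FFilt f n i : C) ⊗ F) ⟶ (FFilt f (n + 1) (i + 1) : C))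
      (v : ((FFilt f n (i + 1) : C) ⊗ G) ⟶ (FFilt f (n + 1) (i + 1) : C)),
      u ≫ (FFilt f (n + 1) (i + 1)).arrow = ((FFilt f n i).arrow ⊗ₘ f) ∧
      v ≫ (FFilt f (n + 1) (i + 1)).arrow = ((FFilt f n (i + 1)).arrow ⊗ₘ 𝟙 G) ∧
      ∃ (w' : biprod.lift
            (Subobject.ofLE (FFilt f n (i + 1)) (FFilt f n i) (FFilt_antitone f n i) ⊗ₘ 𝟙 F)
            (-(𝟙 ((FFilt f n (i + 1) : C)) ⊗ₘ f)) ≫ biprod.desc u v = 0),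
        (ShortComplex.mk
          (biprod.lift
            (Subobject.ofLE (FFilt f n (i + 1)) (FFilt f n i) (FFilt_antitone f n i) ⊗ₘ 𝟙 F)
            (-(𝟙 ((FFilt f n (i + 1) : C)) ⊗ₘ f)))
          (biprod.desc u v) w').ShortExact := by
  have hT := FFilt_succ_succ f n i
  obtain ⟨u, hu⟩ := exists_comp_arrow_eq_of_imageSubobject_le (le_sup_left.trans hT.ge)
  obtain ⟨v, hv⟩ := exists_comp_arrow_eq_of_imageSubobject_le (le_sup_right.trans hT.ge)
  exact ⟨u, v, hu, hv, shortExact_biprod_lift_biprod_desc (Subobject.ofLE_arrow _) hses hu hv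
    hT.symm⟩

/-- for a short exact sequence `0 → F → G → H → 0`, `n ≥ 1` and
`i ≥ 1`, there is a short exact sequence
`0 → ℱ^{i+1}_F(G^{⊗n}) ⊗ F → (ℱ^i_F(G^{⊗n}) ⊗ F) ⊕ (ℱ^{i+1}_F(G^{⊗n}) ⊗ G)
   → ℱ^{i+1}_F(G^{⊗(n+1)}) → 0`,
the first map having components `(inclusion ⊗ id_F, -(id ⊗ f))`, and the second
map being induced by `id ⊗ f` and `inclusion ⊗ id_G` under the identification
`G^{⊗n} ⊗ G = G^{⊗(n+1)}`. -/
theorem FFilt_shortExact_succ (F G H : C) (f : F ⟶ G) (g : G ⟶ H)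
    (w : f ≫ g = 0) (hses : (ShortComplex.mk f g w).ShortExact)
    (n i : ℕ) (hn : 1 ≤ n) (hi : 1 ≤ i) :
    ∃ (u : ((FFilt f n i : C) ⊗ F) ⟶ (FFilt f (n + 1) (i + 1) : C))
      (v : ((FFilt f n (i + 1) : C) ⊗ G) ⟶ (FFilt f (n + 1) (i + 1) : C)),
      u ≫ (FFilt f (n + 1) (i + 1)).arrow = ((FFilt f n i).arrow ⊗ₘ f) ∧
      v ≫ (FFilt f (n + 1) (i + 1)).arrow = ((FFilt f n (i + 1)).arrow ⊗ₘ 𝟙 G) ∧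
      ∃ (w' : biprod.lift
            (Subobject.ofLE (FFilt f n (i + 1)) (FFilt f n i) (FFilt_antitone f n i) ⊗ₘ 𝟙 F)
            (-(𝟙 ((FFilt f n (i + 1) : C)) ⊗ₘ f)) ≫ biprod.desc u v = 0),
        (ShortComplex.mk
          (biprod.lift
            (Subobject.ofLE (FFilt f n (i + 1)) (FFilt f n i) (FFilt_antitone f n i) ⊗ₘ 𝟙 F)
            (-(𝟙 ((FFilt f n (i + 1) : C)) ⊗ₘ f)))
          (biprod.desc u v) w').ShortExact :=
  FFilt_shortExact_succ_general F G H f g w hses n i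
end
end
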